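/- With f and x₀ as in the previous context (f(x) = (2γ/(γ−2))E − x/(4(γ−2)) − (1/(Cm^{(4−γ)/γ}))((16E−x)/(2(γ−2)))^{2/γ} and x₀ the critical point satisfying 1/(4(γ−2)) = (1/(Cm^{(4−γ)/γ}))(2/γ)(1/(2(γ−2)))^{2/γ}(16E−x₀)^{2/γ−1}), one has f(x₀) = x₀/8. -/
import Mathlib


/-- At the critical point `x₀` of the auxiliary function `f`, one has `f(x₀) = x₀/8`. -/
theorem aux_function_value_at_crit (E m C γ : ℝ) (hE : 0 < E) (hm : 0 < m) (hC : 0 < C)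
    (hγ2 : 2 < γ) (hγ4 : γ < 4)
    (f : ℝ → ℝ)
    (hf : ∀ x, f x = (2 * γ / (γ - 2)) * E - x / (4 * (γ - 2))
      - (1 / (C * m ^ ((4 - γ) / γ))) * ((16 * E - x) / (2 * (γ - 2))) ^ ((2 : ℝ) / γ))
    (x₀ : ℝ) (hx₀ : x₀ < 16 * E)
    (hcrit : 1 / (4 * (γ - 2)) = (1 / (C * m ^ ((4 - γ) / γ))) * (2 / γ)
      * (1 / (2 * (γ - 2))) ^ ((2 : ℝ) / γ) * (16 * E - x₀) ^ ((2 : ℝ) / γ - 1)) :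
    f x₀ = x₀ / 8 := by
  have hu : (0:ℝ) < 16 * E - x₀ := by linarith
  have hd : (0:ℝ) < 2 * (γ - 2) := by linarith
  have hγ0 : (0:ℝ) < γ := by linarith
  set A := 1 / (C * m ^ ((4 - γ) / γ)) with hA
  have hsplit : ((16 * E - x₀) / (2 * (γ - 2))) ^ ((2 : ℝ) / γ)
      = (16 * E - x₀) ^ ((2 : ℝ) / γ) * (1 / (2 * (γ - 2))) ^ ((2 : ℝ) / γ) := by
    rw [div_eq_mul_one_div (16 * E - x₀), Real.mul_rpow hu.le (by positivity)]
  have hpow : (16 * E - x₀) ^ ((2 : ℝ) / γ)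
      = (16 * E - x₀) ^ ((2 : ℝ) / γ - 1) * (16 * E - x₀) := by
    rw [← Real.rpow_add_one hu.ne' ((2 : ℝ) / γ - 1)]; ring_nf
  have key : A * ((16 * E - x₀) / (2 * (γ - 2))) ^ ((2 : ℝ) / γ)
      = (γ / 2) * (1 / (4 * (γ - 2))) * (16 * E - x₀) := by
    rw [hsplit, hpow, hcrit]
    field_simp
  rw [hf, key]
  have h2 : γ - 2 ≠ 0 := by linarith
  field_simp
  ring
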